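/- arXiv:1609.05958 — 2 statements merged into one kernel-verified Lean document; each statement's English description precedes it below -/
import Mathlib

section
/- Let K be a finite field of cardinality q and characteristic p, let n ≥ 0 be a natural number, and let F be a polynomial in K[x_0, …, x_n] of total degree at most n+1. Let N be the number of points x ∈ K^{n+1} with F(x) = 0, and let c ∈ K be the coefficient of the monomial (x_0 x_1 ⋯ x_n)^{q−1} in F^{q−1}. Then the image of N in K equals (−1)^n · c; equivalently, N ≡ (−1)^n · c (mod p). -/
/-!
Since `a ^ (q - 1)` is `1` for `a ≠ 0` and `0` for `a = 0`, the polynomial `1 - F ^ (q - 1)` is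
the indicator function of the zero set of `F`; as `q = 0` in `K`, this gives `N = -∑ₓ G(x)` with
`G = F ^ (q - 1)`. Summing a monomial `∏ xᵢ ^ dᵢ` over `K^(n+1)` gives `∏ᵢ ∑ₐ a ^ dᵢ`, which
vanishes as soon as some `dᵢ < q - 1` and equals `(-1)^(n+1)` when all `dᵢ = q - 1`. As
`deg G ≤ (q - 1)(n + 1)`, every other monomial of `G` has some `dᵢ < q - 1`, so only the
coefficient of `(x₀ ⋯ xₙ) ^ (q - 1)` survives.
-/

open MvPolynomial Finset

namespace FiniteField

variable {K : Type*} [Field K] [Fintype K]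

theorem one_sub_pow_card_sub_one_eq_ite [DecidableEq K] (a : K) :
    1 - a ^ (Fintype.card K - 1) = if a = 0 then 1 else 0 := by
  split_ifs with ha
  · rw [ha, zero_pow (by have := Fintype.one_lt_card (α := K); omega), sub_zero]
  · rw [pow_card_sub_one_eq_one a ha, sub_self]

variable (K) in
theorem sum_pow_card_sub_one : ∑ a : K, a ^ (Fintype.card K - 1) = -1 := by
  classical
  have h : ∑ a : K, (1 - a ^ (Fintype.card K - 1)) = 1 := by
    simp only [one_sub_pow_card_sub_one_eq_ite, sum_ite_eq', mem_univ, if_true]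
  rw [sum_sub_distrib, sum_const, card_univ, nsmul_one, cast_card_eq_zero, zero_sub] at h
  exact neg_eq_iff_eq_neg.mp h

end FiniteField

theorem Finsupp.exists_lt_of_ne_const {σ : Type*} [Fintype σ] {d : σ →₀ ℕ} {m : ℕ}
    (hdeg : ∑ i, d i ≤ m * Fintype.card σ)
    (hd : d ≠ Finsupp.equivFunOnFinite.symm fun _ => m) :
    ∃ i, d i < m := by
  by_contra! hge
  obtain ⟨j, hj⟩ : ∃ j, d j ≠ m := by
    by_contra! heq
    exact hd (Finsupp.ext heq)
  have : m * Fintype.card σ < ∑ i, d i := by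
    calc m * Fintype.card σ = ∑ _i : σ, m := by simp [mul_comm]
      _ < ∑ i, d i := sum_lt_sum (fun i _ => hge i) ⟨j, mem_univ j, (hge j).lt_of_ne' hj⟩
  omega

namespace MvPolynomial

variable {K σ : Type*} [Field K] [Fintype K] [Fintype σ] [DecidableEq σ]

theorem sum_prod_pow_eq_prod_sum_pow (d : σ → ℕ) :
    ∑ x : σ → K, ∏ i, x i ^ d i = ∏ i, ∑ a : K, a ^ d i :=
  (Fintype.prod_sum fun i (a : K) => a ^ d i).symm

theorem sum_eval_eq_neg_one_pow_mul_coeff (f : MvPolynomial σ K)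
    (hf : f.totalDegree ≤ (Fintype.card K - 1) * Fintype.card σ) :
    ∑ x, eval x f = (-1) ^ Fintype.card σ *
      coeff (Finsupp.equivFunOnFinite.symm fun _ => Fintype.card K - 1) f := by
  set c : σ →₀ ℕ := Finsupp.equivFunOnFinite.symm fun _ => Fintype.card K - 1
  have hterm (d : σ →₀ ℕ) :
      ∑ x : σ → K, coeff d f * ∏ i, x i ^ d i = coeff d f * ∏ i, ∑ a : K, a ^ d i := by
    rw [← mul_sum, sum_prod_pow_eq_prod_sum_pow]
  calc ∑ x, eval x f = ∑ d ∈ f.support, ∑ x : σ → K, coeff d f * ∏ i, x i ^ d i := by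
        simp only [eval_eq']
        exact sum_comm
    _ = coeff c f * ∏ i, ∑ a : K, a ^ c i := by
        simp only [hterm]
        refine sum_eq_single c (fun d hd hdc => ?_) (fun hc => by simp [notMem_support_iff.mp hc])
        have hdeg : ∑ i, d i ≤ (Fintype.card K - 1) * Fintype.card σ :=
          (Finsupp.sum_fintype d (fun _ e => e) fun _ => rfl) ▸ (le_totalDegree hd).trans hf
        obtain ⟨i, hi⟩ := Finsupp.exists_lt_of_ne_const hdeg hdc
        rw [prod_eq_zero (mem_univ i) (FiniteField.sum_pow_lt_card_sub_one K _ hi), mul_zero]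
    _ = (-1) ^ Fintype.card σ * coeff c f := by
        simp [c, FiniteField.sum_pow_card_sub_one, mul_comm]

theorem cast_card_zeros_eq_neg_sum_eval_pow [Nonempty σ] (F : MvPolynomial σ K) :
    (Nat.card {x : σ → K // eval x F = 0} : K) = -∑ x, eval x (F ^ (Fintype.card K - 1)) := by
  classical
  have hcard : (Fintype.card (σ → K) : K) = 0 := by
    rw [Fintype.card_fun, Nat.cast_pow, FiniteField.cast_card_eq_zero,
      zero_pow Fintype.card_ne_zero]
  have hind : ∑ x : σ → K, (1 - eval x (F ^ (Fintype.card K - 1)))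
      = Fintype.card {x : σ → K // eval x F = 0} := by
    simp only [map_pow, FiniteField.one_sub_pow_card_sub_one_eq_ite, sum_boole,
      Fintype.card_subtype]
  rw [Nat.card_eq_fintype_card, ← hind, sum_sub_distrib, sum_const, card_univ, nsmul_one, hcard,
    zero_sub]

end MvPolynomial

theorem affine_point_count_eq_coeff_general
    {K : Type*} [Field K] [Fintype K]
    (n : ℕ) (F : MvPolynomial (Fin (n + 1)) K)
    (hdeg : F.totalDegree ≤ n + 1) :
    ((Nat.card {x : Fin (n + 1) → K // eval x F = 0} : K)) =
      (-1 : K) ^ n *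
        coeff (Finsupp.equivFunOnFinite.symm fun _ : Fin (n + 1) => Fintype.card K - 1)
          (F ^ (Fintype.card K - 1)) := by
  have hdegG : (F ^ (Fintype.card K - 1)).totalDegree ≤
      (Fintype.card K - 1) * Fintype.card (Fin (n + 1)) := by
    rw [Fintype.card_fin]
    exact (totalDegree_pow F _).trans (Nat.mul_le_mul_left _ hdeg)
  rw [cast_card_zeros_eq_neg_sum_eval_pow, sum_eval_eq_neg_one_pow_mul_coeff _ hdegG,
    Fintype.card_fin, pow_succ]
  ring

/-- Fulton trace formula / mod-p point count: for a finite field `K` of cardinality `q`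
and characteristic `p`, and a polynomial `F` in `n+1` variables of total degree at most
`n+1`, the number `N` of affine zeros of `F` satisfies `(N : K) = (-1)^n * c`, where `c`
is the coefficient of `(x_0 ⋯ x_n)^(q-1)` in `F^(q-1)`. -/
theorem affine_point_count_eq_coeff
    {K : Type*} [Field K] [Fintype K] (p : ℕ) [CharP K p]
    (n : ℕ) (F : MvPolynomial (Fin (n + 1)) K)
    (hdeg : F.totalDegree ≤ n + 1) :
    ((Nat.card {x : Fin (n + 1) → K // eval x F = 0} : K)) =
      (-1 : K) ^ n *
        coeff (Finsupp.equivFunOnFinite.symm fun _ : Fin (n + 1) => Fintype.card K - 1)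
          (F ^ (Fintype.card K - 1)) :=
  affine_point_count_eq_coeff_general n F hdeg
end

section
/- Let p be a prime and let d ≥ 1 be a divisor of p−1. In the polynomial ring 𝔽_p[x_0, …, x_{d−1}] over the field with p elements, the coefficient of the monomial (x_0 x_1 ⋯ x_{d−1})^{p−1} in the power (x_0^d + x_1^d + ⋯ + x_{d−1}^d)^{p−1} is nonzero. -/
/-!
Substituting `X i ↦ X i ^ d` turns `(∑ X i) ^ n` into `(∑ X i ^ d) ^ n`, so with `d * m = p - 1`
the coefficient in question is the multinomial coefficient `(p - 1)! / (m!) ^ d`. Since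
`p - 1 < p`, the prime `p` does not divide `(p - 1)!`, hence not this coefficient either.
-/

open MvPolynomial

theorem Nat.Prime.not_dvd_multinomial {α : Type*} {p : ℕ} (hp : p.Prime) {s : Finset α}
    {f : α → ℕ} (hf : ∑ i ∈ s, f i < p) : ¬ p ∣ Nat.multinomial s f := fun hdvd =>
  have : p ∣ (∑ i ∈ s, f i).factorial := hdvd.trans (Dvd.intro_left _ (Nat.multinomial_spec s f))
  hf.not_ge ((hp.dvd_factorial).mp this)

theorem Nat.Prime.not_dvd_finsuppMultinomial {α : Type*} {p : ℕ} (hp : p.Prime) {f : α →₀ ℕ}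
    (hf : f.sum (fun _ m => m) < p) : ¬ p ∣ f.multinomial := by
  rw [Finsupp.multinomial_eq]
  exact hp.not_dvd_multinomial hf

namespace MvPolynomial

variable {R σ : Type*} [CommSemiring R] [Fintype σ]

theorem sum_X_pow_pow_eq_expand (d n : ℕ) :
    (∑ i, X i ^ d : MvPolynomial σ R) ^ n = expand d ((∑ i, X i) ^ n) := by
  simp only [map_pow, map_sum, expand_X]

theorem coeff_nsmul_sum_X_pow_pow {d : ℕ} (hd : d ≠ 0) (k : σ →₀ ℕ) (n : ℕ) :
    coeff (d • k) ((∑ i, X i ^ d : MvPolynomial σ R) ^ n) =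
      if k.sum (fun _ m => m) = n then k.multinomial else 0 := by
  rw [sum_X_pow_pow_eq_expand, coeff_expand_smul d hd, coeff_sum_X_pow_of_fintype]

end MvPolynomial

theorem coeff_fermat_pow_ne_zero_general (p d : ℕ) (hp : p.Prime)
    (hdvd : d ∣ p - 1) :
    coeff (Finsupp.equivFunOnFinite.symm fun _ : Fin d => p - 1)
        ((∑ i : Fin d, (X i : MvPolynomial (Fin d) (ZMod p)) ^ d) ^ (p - 1)) ≠ 0 := by
  obtain ⟨m, hm⟩ := hdvd
  have hp2 := hp.two_le
  have hd : d ≠ 0 := by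
    rintro rfl
    omega
  set k : Fin d →₀ ℕ := Finsupp.equivFunOnFinite.symm fun _ => m
  have hexp : (Finsupp.equivFunOnFinite.symm fun _ : Fin d => p - 1) = d • k := by
    ext
    simp [k, hm]
  have hsum : k.sum (fun _ m => m) = p - 1 := by
    simp [k, Finsupp.sum_fintype, hm]
  rw [hexp, coeff_nsmul_sum_X_pow_pow hd, if_pos hsum, Ne, ZMod.natCast_eq_zero_iff]
  exact hp.not_dvd_finsuppMultinomial (by omega)

/-- For a prime `p` and a divisor `d ≥ 1` of `p - 1`, the coefficient of
`(x_0 ⋯ x_{d-1})^(p-1)` in `(x_0^d + ⋯ + x_{d-1}^d)^(p-1)` is nonzero in `𝔽_p`. -/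
theorem coeff_fermat_pow_ne_zero (p d : ℕ) (hp : p.Prime) (hd : 1 ≤ d)
    (hdvd : d ∣ p - 1) :
    coeff (Finsupp.equivFunOnFinite.symm fun _ : Fin d => p - 1)
        ((∑ i : Fin d, (X i : MvPolynomial (Fin d) (ZMod p)) ^ d) ^ (p - 1)) ≠ 0 :=
  coeff_fermat_pow_ne_zero_general p d hp hdvd
end
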